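/- Let Θ be a finite set with at least two elements and m a mass function on Θ with belief function b. Then the minimum over all consistent mass functions m' on Θ (with belief function b') of the L1 distance ∑_{∅ ⊊ A ⊊ Θ} |b(A) − b'(A)| equals min_{x ∈ Θ} ∑_{∅ ⊊ A ⊆ Θ \ {x}} b(A), and it is attained by the focused consistent transformation m*(A) = m(A) + m(A \ {x}) (for x ∈ A, and m*(A) = 0 otherwise) at any x minimizing ∑_{∅ ⊊ A ⊆ Θ \ {x}} b(A). -/
import Mathlib


open Finset

variable {Θ : Type*}

/-- A mass function (basic probability assignment) on a finite frame `Θ`: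
`m ∅ = 0`, nonnegative, and total mass one. -/
def IsMass [Fintype Θ] (m : Finset Θ → ℝ) : Prop :=
  m ∅ = 0 ∧ (∀ A, 0 ≤ m A) ∧ ∑ A : Finset Θ, m A = 1

/-- The belief function of a mass function: `b(A) = ∑_{B ⊆ A} m(B)`. -/
def bel (m : Finset Θ → ℝ) (A : Finset Θ) : ℝ := ∑ B ∈ A.powerset, m B

/-- Singleton plausibility: `pl(x) = ∑_{B ∋ x} m(B)`. -/
def pl [Fintype Θ] [DecidableEq Θ] (m : Finset Θ → ℝ) (x : Θ) : ℝ :=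
  ∑ B ∈ Finset.univ.filter (fun B => x ∈ B), m B

/-- The core of a mass function: the intersection of all its focal elements. -/
def core (m : Finset Θ → ℝ) : Set Θ := ⋂ A ∈ {A : Finset Θ | m A ≠ 0}, (A : Set Θ)

/-- A mass function is consistent if its core is nonempty. -/
def Consistent (m : Finset Θ → ℝ) : Prop := (core m).Nonempty

/-- A mass function is focused on `x` if every focal element contains `x`. -/
def Focused (m : Finset Θ → ℝ) (x : Θ) : Prop := ∀ A, m A ≠ 0 → x ∈ A

lemma bel_nonneg (m : Finset Θ → ℝ) (hm : ∀ A, 0 ≤ m A) (A : Finset Θ) : 0 ≤ bel m A :=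
  Finset.sum_nonneg fun B _ => hm B

/-- If every focal element of `m'` contains `x` and `x ∉ A` then `bel m' A = 0`. -/
lemma bel_eq_zero_of_focused [DecidableEq Θ] (m' : Finset Θ → ℝ) (x : Θ)
    (hfoc : ∀ B, m' B ≠ 0 → x ∈ B) (A : Finset Θ) (hx : x ∉ A) : bel m' A = 0 := by
  apply Finset.sum_eq_zero
  intro B hB
  by_contra h
  exact hx (Finset.mem_powerset.mp hB (hfoc B h))

/-- Belief of the focused transform agrees with the original on sets containing `x`. -/
lemma bel_mstar_eq [DecidableEq Θ] (m mstar : Finset Θ → ℝ) (x : Θ)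
    (hms : ∀ A, mstar A = if x ∈ A then m A + m (A \ {x}) else 0)
    (A : Finset Θ) (hx : x ∈ A) : bel mstar A = bel m A := by
  have hxe : x ∉ A.erase x := Finset.notMem_erase x A
  have hA : A = insert x (A.erase x) := (Finset.insert_erase hx).symm
  rw [bel, bel, hA, Finset.sum_powerset_insert hxe, Finset.sum_powerset_insert hxe]
  have h1 : ∀ t ∈ (A.erase x).powerset, mstar t = 0 := by
    intro t ht
    have : x ∉ t := fun hxt => hxe (Finset.mem_powerset.mp ht hxt)
    simp [hms t, this]
  have h2 : ∀ t ∈ (A.erase x).powerset, mstar (insert x t) = m t + m (insert x t) := by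
    intro t ht
    have hxt : x ∉ t := fun hxt => hxe (Finset.mem_powerset.mp ht hxt)
    rw [hms (insert x t), if_pos (Finset.mem_insert_self x t)]
    rw [Finset.insert_sdiff_of_mem _ (Finset.mem_singleton_self x),
      Finset.sdiff_singleton_eq_erase, Finset.erase_eq_of_notMem hxt]
    ring
  rw [Finset.sum_eq_zero h1, Finset.sum_congr rfl h2, zero_add, Finset.sum_add_distrib]

/-- The global L1 consistent approximation in the belief space: the
minimal L1 belief distance from `m` to the consistent mass functions equals
`min_x ∑_{∅ ⊊ A ⊆ {x}ᶜ} b(A)`, and it is attained by the focused consistent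
transformation at any minimizing `x`. -/
theorem stmt16 [Fintype Θ] [DecidableEq Θ] [Nonempty Θ] (hcard : 2 ≤ Fintype.card Θ)
    (m : Finset Θ → ℝ) (hm : IsMass m)
    (f : Θ → ℝ)
    (hf : ∀ x : Θ, f x = ∑ A ∈ ({x}ᶜ : Finset Θ).powerset.filter (· ≠ ∅), bel m A) :
    (∀ m' : Finset Θ → ℝ, IsMass m' → Consistent m' →
      Finset.univ.inf' Finset.univ_nonempty f ≤
        ∑ A ∈ Finset.univ.filter (fun A : Finset Θ => A ≠ ∅ ∧ A ≠ Finset.univ),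
          |bel m A - bel m' A|) ∧
    (∀ x : Θ, f x = Finset.univ.inf' Finset.univ_nonempty f →
      ∀ mstar : Finset Θ → ℝ,
        (∀ A : Finset Θ, mstar A = if x ∈ A then m A + m (A \ {x}) else 0) →
        IsMass mstar ∧ Consistent mstar ∧
          (∑ A ∈ Finset.univ.filter (fun A : Finset Θ => A ≠ ∅ ∧ A ≠ Finset.univ),
              |bel m A - bel mstar A|) =
            Finset.univ.inf' Finset.univ_nonempty f) := by
  obtain ⟨hm0, hmpos, hmsum⟩ := hm
  constructor
  · -- lower bound
    intro m' hm' hc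
    obtain ⟨x, hx⟩ := hc
    have hfoc : ∀ B, m' B ≠ 0 → x ∈ B := by
      intro B hB
      simp only [core, Set.mem_iInter, Set.mem_setOf_eq] at hx
      exact_mod_cast hx B hB
    have hsub : ({x}ᶜ : Finset Θ).powerset.filter (· ≠ ∅) ⊆
        Finset.univ.filter (fun A : Finset Θ => A ≠ ∅ ∧ A ≠ Finset.univ) := by
      intro A hA
      simp only [Finset.mem_filter, Finset.mem_powerset, Finset.subset_compl_singleton] at hA
      simp only [Finset.mem_filter, Finset.mem_univ, true_and]
      exact ⟨hA.2, fun h => hA.1 (h ▸ Finset.mem_univ x)⟩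
    calc Finset.univ.inf' Finset.univ_nonempty f ≤ f x := Finset.inf'_le f (Finset.mem_univ x)
      _ = ∑ A ∈ ({x}ᶜ : Finset Θ).powerset.filter (· ≠ ∅), |bel m A - bel m' A| := by
          rw [hf x]
          apply Finset.sum_congr rfl
          intro A hA
          simp only [Finset.mem_filter, Finset.mem_powerset,
            Finset.subset_compl_singleton] at hA
          rw [bel_eq_zero_of_focused m' x hfoc A hA.1, sub_zero,
            abs_of_nonneg (bel_nonneg m hmpos A)]
      _ ≤ _ := Finset.sum_le_sum_of_subset_of_nonneg hsub (fun A _ _ => abs_nonneg _)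
  · -- attainment
    intro x hfx mstar hms
    have hmsnn : ∀ A, 0 ≤ mstar A := by
      intro A
      rw [hms A]
      split
      · exact add_nonneg (hmpos A) (hmpos _)
      · exact le_refl 0
    have hmszero : ∀ A, x ∉ A → mstar A = 0 := fun A hA => by simp [hms A, hA]
    have hbelu : bel mstar Finset.univ = bel m Finset.univ :=
      bel_mstar_eq m mstar x hms Finset.univ (Finset.mem_univ x)
    have hsum : ∑ A : Finset Θ, mstar A = 1 := by
      have h1 : ∀ (g : Finset Θ → ℝ), ∑ A : Finset Θ, g A = bel g Finset.univ := by
        intro g; rw [bel, Finset.powerset_univ]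
      rw [h1 mstar, hbelu, ← h1 m, hmsum]
    refine ⟨⟨hmszero ∅ (Finset.notMem_empty x), hmsnn, hsum⟩, ⟨x, ?_⟩, ?_⟩
    · simp only [core, Set.mem_iInter, Set.mem_setOf_eq]
      intro A hA
      by_contra h
      simp only [Finset.coe_mem, Finset.mem_coe] at h
      exact hA (hmszero A h)
    · -- the sum equals f x = inf
      rw [← hfx, hf x]
      have key : ∀ A ∈ Finset.univ.filter (fun A : Finset Θ => A ≠ ∅ ∧ A ≠ Finset.univ),
          |bel m A - bel mstar A| = if x ∈ A then 0 else bel m A := by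
        intro A _
        by_cases hxA : x ∈ A
        · rw [bel_mstar_eq m mstar x hms A hxA, sub_self, abs_zero, if_pos hxA]
        · rw [bel_eq_zero_of_focused mstar x (fun B hB => by
              by_contra hc; exact hB (hmszero B hc)) A hxA, sub_zero,
            abs_of_nonneg (bel_nonneg m hmpos A), if_neg hxA]
      rw [Finset.sum_congr rfl key, Finset.sum_ite, Finset.sum_const, smul_zero, zero_add]
      apply Finset.sum_congr _ (fun _ _ => rfl)
      ext A
      simp only [Finset.mem_filter, Finset.mem_univ, true_and, Finset.mem_powerset,
        Finset.subset_compl_singleton]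
      constructor
      · rintro ⟨⟨hne, _⟩, hxA⟩; exact ⟨hxA, hne⟩
      · rintro ⟨hxA, hne⟩; exact ⟨⟨hne, fun h => hxA (h ▸ Finset.mem_univ x)⟩, hxA⟩
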